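/- arXiv:2506.04451 — 6 statements merged into one kernel-verified Lean document; each statement's English description precedes it below -/
import Mathlib

section
/- Let 𝒜 = [[Φ, Ψ₁],[Ψ₂, -Θ]] be a generalized saddle-point matrix with Φ invertible and Schur complement S := Θ + Ψ₂ Φ⁻¹ Ψ₁ invertible, and let P = [[Φ, Ψ₁],[0, -S]]. Then (𝒜 P⁻¹ - I)² = 0, i.e., 𝒜 P⁻¹ - I is nilpotent of index at most two. -/
/-!
Block elimination factors `𝒜 = L * P` with `L = [[I, 0], [Ψ₂ Φ⁻¹, I]]`, because the
Schur complement of `Φ` in `𝒜` is `-Θ - Ψ₂ Φ⁻¹ Ψ₁ = -S`. Hence `𝒜 P⁻¹ - I = L - I` is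
strictly block lower triangular, and its square vanishes.
-/

open Matrix

namespace Matrix

variable {l m α : Type*} [DecidableEq l] [DecidableEq m]

theorem fromBlocks_zero_zero_zero_sq [Fintype l] [Fintype m] [Semiring α] (C : Matrix m l α) :
    (fromBlocks 0 0 C 0 : Matrix (l ⊕ m) (l ⊕ m) α) ^ 2 = 0 := by
  rw [sq, fromBlocks_multiply]
  simp

theorem fromBlocks_one_zero_one_sub_one [Ring α] (C : Matrix m l α) :
    (fromBlocks 1 0 C 1 : Matrix (l ⊕ m) (l ⊕ m) α) - 1 = fromBlocks 0 0 C 0 := by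
  rw [sub_eq_iff_eq_add, ← fromBlocks_one, fromBlocks_add]
  simp

theorem fromBlocks_eq_lower_mul_upper [Fintype l] [Fintype m] [CommRing α] {A : Matrix l l α}
    (hA : IsUnit A.det) (B : Matrix l m α) (C : Matrix m l α) (D : Matrix m m α) :
    fromBlocks A B C D = fromBlocks 1 0 (C * A⁻¹) 1 * fromBlocks A B 0 (D - C * A⁻¹ * B) := by
  rw [fromBlocks_multiply]
  simp [nonsing_inv_mul_cancel_right _ _ hA, Matrix.mul_assoc]

end Matrix

theorem saddle_point_preconditioned_nilpotent_general
    (n m : ℕ)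
    (Φ : Matrix (Fin n) (Fin n) ℝ) (Ψ₁ : Matrix (Fin n) (Fin m) ℝ)
    (Ψ₂ : Matrix (Fin m) (Fin n) ℝ) (Θ : Matrix (Fin m) (Fin m) ℝ)
    (hΦ : IsUnit Φ.det)
    (S : Matrix (Fin m) (Fin m) ℝ) (hS : S = Θ + Ψ₂ * Φ⁻¹ * Ψ₁)
    (hSinv : IsUnit S.det)
    (𝒜 : Matrix (Fin n ⊕ Fin m) (Fin n ⊕ Fin m) ℝ)
    (h𝒜 : 𝒜 = Matrix.fromBlocks Φ Ψ₁ Ψ₂ (-Θ))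
    (P : Matrix (Fin n ⊕ Fin m) (Fin n ⊕ Fin m) ℝ)
    (hP : P = Matrix.fromBlocks Φ Ψ₁ 0 (-S)) :
    (𝒜 * P⁻¹ - 1) ^ 2 = 0 := by
  have hschur : -Θ - Ψ₂ * Φ⁻¹ * Ψ₁ = -S := by rw [hS, neg_add']
  have hfactor : 𝒜 = fromBlocks 1 0 (Ψ₂ * Φ⁻¹) 1 * P := by
    rw [h𝒜, hP, fromBlocks_eq_lower_mul_upper hΦ, hschur]
  have hPdet : IsUnit P.det := by
    rw [← isUnit_iff_isUnit_det, hP, isUnit_fromBlocks_zero₂₁]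
    exact ⟨(isUnit_iff_isUnit_det Φ).mpr hΦ, ((isUnit_iff_isUnit_det S).mpr hSinv).neg⟩
  rw [hfactor, mul_nonsing_inv_cancel_right _ _ hPdet, fromBlocks_one_zero_one_sub_one,
    fromBlocks_zero_zero_zero_sq]

/-- For the generalized saddle-point matrix
`𝒜 = [[Φ, Ψ₁],[Ψ₂, -Θ]]` with `Φ` invertible and invertible Schur complement
`S = Θ + Ψ₂ Φ⁻¹ Ψ₁`, and the block upper-triangular preconditioner
`P = [[Φ, Ψ₁],[0, -S]]`, one has `(𝒜 P⁻¹ - I)² = 0`. -/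
theorem saddle_point_preconditioned_nilpotent
    (n m : ℕ) (hn : 0 < n) (hm : 0 < m)
    (Φ : Matrix (Fin n) (Fin n) ℝ) (Ψ₁ : Matrix (Fin n) (Fin m) ℝ)
    (Ψ₂ : Matrix (Fin m) (Fin n) ℝ) (Θ : Matrix (Fin m) (Fin m) ℝ)
    (hΦ : IsUnit Φ.det)
    (S : Matrix (Fin m) (Fin m) ℝ) (hS : S = Θ + Ψ₂ * Φ⁻¹ * Ψ₁)
    (hSinv : IsUnit S.det)
    (𝒜 : Matrix (Fin n ⊕ Fin m) (Fin n ⊕ Fin m) ℝ)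
    (h𝒜 : 𝒜 = Matrix.fromBlocks Φ Ψ₁ Ψ₂ (-Θ))
    (P : Matrix (Fin n ⊕ Fin m) (Fin n ⊕ Fin m) ℝ)
    (hP : P = Matrix.fromBlocks Φ Ψ₁ 0 (-S)) :
    (𝒜 * P⁻¹ - 1) ^ 2 = 0 :=
  saddle_point_preconditioned_nilpotent_general n m Φ Ψ₁ Ψ₂ Θ hΦ S hS hSinv 𝒜 h𝒜 P hP
end

section
/- Let 𝒜 = [[Φ, Ψ₁],[Ψ₂, -Θ]] be a generalized saddle-point matrix with Φ invertible and Schur complement S := Θ + Ψ₂ Φ⁻¹ Ψ₁ invertible, and let P = [[Φ, Ψ₁],[0, -S]]. Then the spectrum of the preconditioned matrix 𝒜 P⁻¹ (regarded as a complex matrix) equals {1}; that is, all eigenvalues of the preconditioned matrix are equal to 1. -/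
open Matrix

/-!
`𝒜 = (1 + N) P` with `N = [[0, 0], [Ψ₂ Φ⁻¹, 0]]`, which is the block LU factorisation of `𝒜`
in disguise. Hence `𝒜 P⁻¹ = 1 + N` with `N² = 0`, and a unipotent element has spectrum `{1}`.
-/

theorem IsNilpotent.spectrum_eq_singleton_zero {𝕜 A : Type*} [Field 𝕜] [Ring A] [Algebra 𝕜 A]
    [Nontrivial A] {a : A} (ha : IsNilpotent a) : spectrum 𝕜 a = {0} := by
  ext μ
  rw [spectrum.mem_iff, Set.mem_singleton_iff, not_iff_comm]
  constructor
  · intro hμ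
    have hunit : IsUnit (algebraMap 𝕜 A μ) := (Ne.isUnit hμ).map _
    simpa [sub_eq_add_neg] using
      ha.neg.isUnit_add_left_of_commute hunit (Algebra.commutes μ (-a)).symm
  · rintro hunit rfl
    exact ha.neg.not_isUnit (by simpa using hunit)

theorem IsNilpotent.spectrum_one_add {𝕜 A : Type*} [Field 𝕜] [Ring A] [Algebra 𝕜 A]
    [Nontrivial A] {a : A} (ha : IsNilpotent a) : spectrum 𝕜 (1 + a) = {1} := by
  rw [← map_one (algebraMap 𝕜 A), ← spectrum.singleton_add_eq, ha.spectrum_eq_singleton_zero,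
    Set.singleton_add_singleton, add_zero]

namespace Matrix

variable {l m R : Type*} [Fintype l] [Fintype m] [DecidableEq l] [DecidableEq m]

theorem isNilpotent_fromBlocks_zero_zero_zero [Ring R] (C : Matrix m l R) :
    IsNilpotent (fromBlocks 0 0 C 0 : Matrix (l ⊕ m) (l ⊕ m) R) :=
  ⟨2, by simp [sq, fromBlocks_multiply]⟩

theorem fromBlocks_eq_one_add_mul_fromBlocks_schur [CommRing R] (A : Matrix l l R)
    (B : Matrix l m R) (C : Matrix m l R) (D : Matrix m m R) (hA : IsUnit A.det) :
    fromBlocks A B C (-D) =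
      (1 + fromBlocks 0 0 (C * A⁻¹) 0) * fromBlocks A B 0 (-(D + C * A⁻¹ * B)) := by
  rw [← fromBlocks_one, fromBlocks_add, fromBlocks_multiply]
  simp [Matrix.mul_assoc, nonsing_inv_mul_cancel_right A C hA]

end Matrix

theorem saddle_point_preconditioned_spectrum_general
    (n m : ℕ) (hn : 0 < n)
    (Φ : Matrix (Fin n) (Fin n) ℝ) (Ψ₁ : Matrix (Fin n) (Fin m) ℝ)
    (Ψ₂ : Matrix (Fin m) (Fin n) ℝ) (Θ : Matrix (Fin m) (Fin m) ℝ)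
    (hΦ : IsUnit Φ.det)
    (S : Matrix (Fin m) (Fin m) ℝ) (hS : S = Θ + Ψ₂ * Φ⁻¹ * Ψ₁)
    (hSinv : IsUnit S.det)
    (𝒜 : Matrix (Fin n ⊕ Fin m) (Fin n ⊕ Fin m) ℝ)
    (h𝒜 : 𝒜 = Matrix.fromBlocks Φ Ψ₁ Ψ₂ (-Θ))
    (P : Matrix (Fin n ⊕ Fin m) (Fin n ⊕ Fin m) ℝ)
    (hP : P = Matrix.fromBlocks Φ Ψ₁ 0 (-S)) :
    spectrum ℂ ((𝒜 * P⁻¹).map (Complex.ofReal)) = {1} := by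
  have hPdet : IsUnit P.det := by
    rw [hP, det_fromBlocks_zero₂₁, det_neg]
    exact hΦ.mul ((isUnit_neg_one.pow _).mul hSinv)
  have hpre : 𝒜 * P⁻¹ = 1 + fromBlocks 0 0 (Ψ₂ * Φ⁻¹) 0 := by
    rw [h𝒜, fromBlocks_eq_one_add_mul_fromBlocks_schur Φ Ψ₁ Ψ₂ Θ hΦ, ← hS, ← hP,
      mul_nonsing_inv_cancel_right _ _ hPdet]
  have : Nonempty (Fin n ⊕ Fin m) := ⟨.inl ⟨0, hn⟩⟩
  change spectrum ℂ (Complex.ofRealHom.mapMatrix (𝒜 * P⁻¹)) = {1}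
  rw [hpre, map_add, map_one]
  exact ((isNilpotent_fromBlocks_zero_zero_zero _).map _).spectrum_one_add

/-- For the generalized saddle-point matrix
`𝒜 = [[Φ, Ψ₁],[Ψ₂, -Θ]]` with `Φ` invertible and invertible Schur complement
`S = Θ + Ψ₂ Φ⁻¹ Ψ₁`, and the block upper-triangular preconditioner
`P = [[Φ, Ψ₁],[0, -S]]`, the spectrum of `𝒜 P⁻¹` (as a complex matrix)
equals `{1}`. -/
theorem saddle_point_preconditioned_spectrum
    (n m : ℕ) (hn : 0 < n) (hm : 0 < m)
    (Φ : Matrix (Fin n) (Fin n) ℝ) (Ψ₁ : Matrix (Fin n) (Fin m) ℝ)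
    (Ψ₂ : Matrix (Fin m) (Fin n) ℝ) (Θ : Matrix (Fin m) (Fin m) ℝ)
    (hΦ : IsUnit Φ.det)
    (S : Matrix (Fin m) (Fin m) ℝ) (hS : S = Θ + Ψ₂ * Φ⁻¹ * Ψ₁)
    (hSinv : IsUnit S.det)
    (𝒜 : Matrix (Fin n ⊕ Fin m) (Fin n ⊕ Fin m) ℝ)
    (h𝒜 : 𝒜 = Matrix.fromBlocks Φ Ψ₁ Ψ₂ (-Θ))
    (P : Matrix (Fin n ⊕ Fin m) (Fin n ⊕ Fin m) ℝ)
    (hP : P = Matrix.fromBlocks Φ Ψ₁ 0 (-S)) :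
    spectrum ℂ ((𝒜 * P⁻¹).map (Complex.ofReal)) = {1} :=
  saddle_point_preconditioned_spectrum_general n m hn Φ Ψ₁ Ψ₂ Θ hΦ S hS hSinv 𝒜 h𝒜 P hP
end

section
/- Let 𝒜 = [[Φ, Ψ₁],[Ψ₂, -Θ]] be a generalized saddle-point matrix with Φ invertible and Schur complement S := Θ + Ψ₂ Φ⁻¹ Ψ₁ invertible, and let P = [[Φ, Ψ₁],[0, -S]]. Then the minimal polynomial of the preconditioned matrix 𝒜 P⁻¹ over ℝ divides (X - 1)²; in particular, it has degree at most two. -/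
open Matrix Polynomial

/-!
Block elimination of `Ψ₂` factors the saddle-point matrix as `𝒜 = L * P` with the block
unit lower-triangular `L = [[1, 0], [Ψ₂ Φ⁻¹, 1]]`, so `𝒜 P⁻¹ = L`. Since `L - 1` has its only
nonzero block strictly below the diagonal, `(L - 1)² = 0`, i.e. `(X - 1)²` annihilates `𝒜 P⁻¹`.
-/

section MinpolyDvd

variable {K A : Type*} [Field K] [Ring A] [Algebra K A]

theorem minpoly_dvd_X_sub_C_pow_of_sub_algebraMap_pow_eq_zero {x : A} {a : K} {k : ℕ}
    (h : (x - algebraMap K A a) ^ k = 0) : minpoly K x ∣ (X - C a) ^ k :=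
  minpoly.dvd K x (by simpa [map_pow, map_sub] using h)

theorem natDegree_minpoly_le_of_sub_algebraMap_pow_eq_zero {x : A} {a : K} {k : ℕ}
    (h : (x - algebraMap K A a) ^ k = 0) : (minpoly K x).natDegree ≤ k := by
  have hdeg := natDegree_le_of_dvd (minpoly_dvd_X_sub_C_pow_of_sub_algebraMap_pow_eq_zero h)
    (pow_ne_zero k (X_sub_C_ne_zero a))
  rwa [natDegree_pow, natDegree_X_sub_C, mul_one] at hdeg

end MinpolyDvd

namespace Matrix

variable {l m R : Type*} [Fintype l] [Fintype m] [DecidableEq l] [DecidableEq m] [CommRing R]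

theorem sq_fromBlocks_one_zero_one_sub_one (C : Matrix m l R) :
    (fromBlocks 1 0 C 1 - 1 : Matrix (l ⊕ m) (l ⊕ m) R) ^ 2 = 0 := by
  have hsub : (fromBlocks 1 0 C 1 - 1 : Matrix (l ⊕ m) (l ⊕ m) R) = fromBlocks 0 0 C 0 := by
    rw [← fromBlocks_one, sub_eq_iff_eq_add, fromBlocks_add]
    simp
  rw [hsub, sq, fromBlocks_multiply]
  simp

theorem fromBlocks_eq_fromBlocks_one_zero_mul_fromBlocks_zero₂₁ {Φ : Matrix l l R}
    (hΦ : IsUnit Φ.det) (Ψ₁ : Matrix l m R) (Ψ₂ : Matrix m l R) (Θ : Matrix m m R) :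
    fromBlocks Φ Ψ₁ Ψ₂ (-Θ) =
      fromBlocks 1 0 (Ψ₂ * Φ⁻¹) 1 * fromBlocks Φ Ψ₁ 0 (-(Θ + Ψ₂ * Φ⁻¹ * Ψ₁)) := by
  rw [fromBlocks_multiply]
  simp [nonsing_inv_mul_cancel_right _ _ hΦ, Matrix.mul_assoc]

end Matrix

theorem saddle_point_preconditioned_minpoly_general
    (n m : ℕ)
    (Φ : Matrix (Fin n) (Fin n) ℝ) (Ψ₁ : Matrix (Fin n) (Fin m) ℝ)
    (Ψ₂ : Matrix (Fin m) (Fin n) ℝ) (Θ : Matrix (Fin m) (Fin m) ℝ)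
    (hΦ : IsUnit Φ.det)
    (S : Matrix (Fin m) (Fin m) ℝ) (hS : S = Θ + Ψ₂ * Φ⁻¹ * Ψ₁)
    (hSinv : IsUnit S.det)
    (𝒜 : Matrix (Fin n ⊕ Fin m) (Fin n ⊕ Fin m) ℝ)
    (h𝒜 : 𝒜 = Matrix.fromBlocks Φ Ψ₁ Ψ₂ (-Θ))
    (P : Matrix (Fin n ⊕ Fin m) (Fin n ⊕ Fin m) ℝ)
    (hP : P = Matrix.fromBlocks Φ Ψ₁ 0 (-S)) :
    minpoly ℝ (𝒜 * P⁻¹) ∣ (X - C 1) ^ 2 ∧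
      (minpoly ℝ (𝒜 * P⁻¹)).natDegree ≤ 2 := by
  have hP_unit : IsUnit P.det := by
    rw [hP, det_fromBlocks_zero₂₁]
    exact hΦ.mul (by simpa [det_neg] using hSinv)
  have h𝒜P : 𝒜 * P⁻¹ = fromBlocks 1 0 (Ψ₂ * Φ⁻¹) 1 := by
    rw [h𝒜, fromBlocks_eq_fromBlocks_one_zero_mul_fromBlocks_zero₂₁ hΦ, ← hS, ← hP,
      mul_nonsing_inv_cancel_right _ _ hP_unit]
  have hsq : (𝒜 * P⁻¹ - algebraMap ℝ _ 1) ^ 2 = 0 := by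
    rw [map_one, h𝒜P]
    exact sq_fromBlocks_one_zero_one_sub_one _
  exact ⟨minpoly_dvd_X_sub_C_pow_of_sub_algebraMap_pow_eq_zero hsq,
    natDegree_minpoly_le_of_sub_algebraMap_pow_eq_zero hsq⟩

/-- For the generalized saddle-point matrix
`𝒜 = [[Φ, Ψ₁],[Ψ₂, -Θ]]` with `Φ` invertible and invertible Schur complement
`S = Θ + Ψ₂ Φ⁻¹ Ψ₁`, and the block upper-triangular preconditioner
`P = [[Φ, Ψ₁],[0, -S]]`, the minimal polynomial of `𝒜 P⁻¹` over `ℝ`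
divides `(X - 1)²`; in particular it has degree at most two. -/
theorem saddle_point_preconditioned_minpoly
    (n m : ℕ) (hn : 0 < n) (hm : 0 < m)
    (Φ : Matrix (Fin n) (Fin n) ℝ) (Ψ₁ : Matrix (Fin n) (Fin m) ℝ)
    (Ψ₂ : Matrix (Fin m) (Fin n) ℝ) (Θ : Matrix (Fin m) (Fin m) ℝ)
    (hΦ : IsUnit Φ.det)
    (S : Matrix (Fin m) (Fin m) ℝ) (hS : S = Θ + Ψ₂ * Φ⁻¹ * Ψ₁)
    (hSinv : IsUnit S.det)
    (𝒜 : Matrix (Fin n ⊕ Fin m) (Fin n ⊕ Fin m) ℝ)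
    (h𝒜 : 𝒜 = Matrix.fromBlocks Φ Ψ₁ Ψ₂ (-Θ))
    (P : Matrix (Fin n ⊕ Fin m) (Fin n ⊕ Fin m) ℝ)
    (hP : P = Matrix.fromBlocks Φ Ψ₁ 0 (-S)) :
    minpoly ℝ (𝒜 * P⁻¹) ∣ (X - C 1) ^ 2 ∧
      (minpoly ℝ (𝒜 * P⁻¹)).natDegree ≤ 2 :=
  saddle_point_preconditioned_minpoly_general n m Φ Ψ₁ Ψ₂ Θ hΦ S hS hSinv 𝒜 h𝒜 P hP
end

section
/- Let Φ ∈ ℝ^{n×n} and W ∈ ℝ^{m×m} be invertible, let Ψ₁ ∈ ℝ^{n×m}, Ψ₂ ∈ ℝ^{m×n}, let γ > 0, set S := Ψ₂ Φ⁻¹ Ψ₁, and assume that S and γ⁻¹ W + S are invertible (so that Φ_γ := Φ + γ Ψ₁ W⁻¹ Ψ₂ is invertible). Then the augmented Schur complement S_γ := Ψ₂ Φ_γ⁻¹ Ψ₁ is invertible and its inverse satisfies the Sherman–Morrison–Woodbury identity S_γ⁻¹ = γ W⁻¹ + S⁻¹. -/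
/-!
Write `C = γ W⁻¹`, so that `Φ_γ = Φ + Ψ₁ C Ψ₂`. The resolvent identity
`Φ_γ⁻¹ (Φ_γ - Φ) Φ⁻¹ = Φ⁻¹ - Φ_γ⁻¹`, sandwiched between `Ψ₂` and `Ψ₁`, reads `S_γ C S = S - S_γ`,
that is `S_γ (C + S⁻¹) = 1`. That `Φ_γ` is invertible at all follows from the matrix determinant
lemma `det (Φ + Ψ₁ C Ψ₂) = det Φ · det (C⁻¹ + S) · det C`.
-/

open Matrix

namespace Matrix

variable {ι κ R : Type*} [Fintype ι] [DecidableEq ι] [Fintype κ] [CommRing R]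
  {A : Matrix ι ι R} {U : Matrix ι κ R} {C : Matrix κ κ R} {V : Matrix κ ι R}

theorem isUnit_det_add_mul_mul [DecidableEq κ] (hA : IsUnit A.det) (hC : IsUnit C.det)
    (hCS : IsUnit (C⁻¹ + V * A⁻¹ * U).det) : IsUnit (A + U * C * V).det := by
  have hfactor : 1 + V * A⁻¹ * (U * C) = (C⁻¹ + V * A⁻¹ * U) * C := by
    rw [Matrix.add_mul, nonsing_inv_mul C hC, Matrix.mul_assoc (V * A⁻¹) U C]
  rw [det_add_mul _ _ hA, hfactor, det_mul]
  exact hA.mul (hCS.mul hC)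

theorem schur_sub_schur_add_mul_mul (hA : IsUnit A.det) (hB : IsUnit (A + U * C * V).det) :
    V * A⁻¹ * U - V * (A + U * C * V)⁻¹ * U =
      V * (A + U * C * V)⁻¹ * U * C * (V * A⁻¹ * U) := by
  set B := A + U * C * V with hBdef
  have hUCV : U * C * V = B - A := by rw [hBdef, add_sub_cancel_left]
  have hres : B⁻¹ * (U * C * V) * A⁻¹ = A⁻¹ - B⁻¹ := by
    rw [hUCV, Matrix.mul_sub, Matrix.sub_mul, nonsing_inv_mul B hB, Matrix.one_mul,
      mul_nonsing_inv_cancel_right _ _ hA]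
  calc V * A⁻¹ * U - V * B⁻¹ * U = V * (A⁻¹ - B⁻¹) * U := by rw [Matrix.mul_sub, Matrix.sub_mul]
    _ = V * B⁻¹ * U * C * (V * A⁻¹ * U) := by rw [← hres]; simp only [Matrix.mul_assoc]

theorem schur_add_mul_mul_mul_add_inv_eq_one [DecidableEq κ] (hA : IsUnit A.det)
    (hB : IsUnit (A + U * C * V).det) (hS : IsUnit (V * A⁻¹ * U).det) :
    V * (A + U * C * V)⁻¹ * U * (C + (V * A⁻¹ * U)⁻¹) = 1 := by
  set S := V * A⁻¹ * U
  set Sc := V * (A + U * C * V)⁻¹ * U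
  calc Sc * (C + S⁻¹) = (Sc * C * S + Sc) * S⁻¹ := by
        rw [Matrix.add_mul, Matrix.mul_assoc _ S, mul_nonsing_inv S hS, Matrix.mul_one,
          Matrix.mul_add]
    _ = 1 := by
        rw [← schur_sub_schur_add_mul_mul hA hB, sub_add_cancel, mul_nonsing_inv S hS]

end Matrix

theorem augmented_schur_complement_inverse_general
    (n m : ℕ)
    (Φ : Matrix (Fin n) (Fin n) ℝ) (Ψ₁ : Matrix (Fin n) (Fin m) ℝ)
    (Ψ₂ : Matrix (Fin m) (Fin n) ℝ) (W : Matrix (Fin m) (Fin m) ℝ)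
    (hΦ : IsUnit Φ.det) (hW : IsUnit W.det) (γ : ℝ) (hγ : 0 < γ)
    (S : Matrix (Fin m) (Fin m) ℝ) (hS : S = Ψ₂ * Φ⁻¹ * Ψ₁)
    (hSinv : IsUnit S.det) (hWS : IsUnit (γ⁻¹ • W + S).det)
    (Φγ : Matrix (Fin n) (Fin n) ℝ) (hΦγ : Φγ = Φ + γ • (Ψ₁ * W⁻¹ * Ψ₂))
    (Sγ : Matrix (Fin m) (Fin m) ℝ) (hSγ : Sγ = Ψ₂ * Φγ⁻¹ * Ψ₁) :
    IsUnit Sγ.det ∧ Sγ⁻¹ = γ • W⁻¹ + S⁻¹ := by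
  subst hS hΦγ hSγ
  have hCW : γ • W⁻¹ * (γ⁻¹ • W) = 1 := by
    rw [smul_mul_smul_comm, mul_inv_cancel₀ hγ.ne', one_smul, nonsing_inv_mul W hW]
  have hΦγ : IsUnit (Φ + Ψ₁ * (γ • W⁻¹) * Ψ₂).det :=
    isUnit_det_add_mul_mul hΦ (isUnit_det_of_right_inverse hCW) (by rwa [inv_eq_right_inv hCW])
  have hprod := schur_add_mul_mul_mul_add_inv_eq_one hΦ hΦγ hSinv
  rw [← Matrix.smul_mul, ← Matrix.mul_smul]
  exact ⟨isUnit_det_of_right_inverse hprod, inv_eq_right_inv hprod⟩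

/-- With `Φ` and `W` invertible, `γ > 0`, `S = Ψ₂ Φ⁻¹ Ψ₁`,
and both `S` and `γ⁻¹ W + S` invertible (so `Φ_γ = Φ + γ Ψ₁ W⁻¹ Ψ₂` is
invertible), the augmented Schur complement `S_γ = Ψ₂ Φ_γ⁻¹ Ψ₁` is invertible
and `S_γ⁻¹ = γ W⁻¹ + S⁻¹` (Sherman–Morrison–Woodbury). -/
theorem augmented_schur_complement_inverse
    (n m : ℕ) (hn : 0 < n) (hm : 0 < m)
    (Φ : Matrix (Fin n) (Fin n) ℝ) (Ψ₁ : Matrix (Fin n) (Fin m) ℝ)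
    (Ψ₂ : Matrix (Fin m) (Fin n) ℝ) (W : Matrix (Fin m) (Fin m) ℝ)
    (hΦ : IsUnit Φ.det) (hW : IsUnit W.det) (γ : ℝ) (hγ : 0 < γ)
    (S : Matrix (Fin m) (Fin m) ℝ) (hS : S = Ψ₂ * Φ⁻¹ * Ψ₁)
    (hSinv : IsUnit S.det) (hWS : IsUnit (γ⁻¹ • W + S).det)
    (Φγ : Matrix (Fin n) (Fin n) ℝ) (hΦγ : Φγ = Φ + γ • (Ψ₁ * W⁻¹ * Ψ₂))
    (Sγ : Matrix (Fin m) (Fin m) ℝ) (hSγ : Sγ = Ψ₂ * Φγ⁻¹ * Ψ₁) :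
    IsUnit Sγ.det ∧ Sγ⁻¹ = γ • W⁻¹ + S⁻¹ :=
  augmented_schur_complement_inverse_general n m Φ Ψ₁ Ψ₂ W hΦ hW γ hγ S hS hSinv hWS Φγ hΦγ Sγ hSγ
end

section
/- Let A ∈ ℝ^{s×s} be invertible, B ∈ ℝ^{n_p×n_u}, let Φ be an invertible real (s·n_u)×(s·n_u) matrix, and let Δt ≠ 0. Define Ψ₁ := Δt (A ⊗ Bᵀ), Ψ₂ := Δt (A ⊗ B), and S_int := (I_s ⊗ B) Φ⁻¹ (I_s ⊗ Bᵀ), and assume S_int is invertible. Then Ψ₂ Φ⁻¹ Ψ₁ is invertible and (Ψ₂ Φ⁻¹ Ψ₁)⁻¹ = Δt⁻² · (A⁻¹ ⊗ I_{n_p}) · S_int⁻¹ · (A⁻¹ ⊗ I_{n_p}). -/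
/-!
Writing `A ⊗ B = (A ⊗ I)(I ⊗ B)` and `A ⊗ Bᵀ = (I ⊗ Bᵀ)(A ⊗ I)` by the mixed product property,
`Ψ₂ Φ⁻¹ Ψ₁ = Δt² (A ⊗ I) S_int (A ⊗ I)`, a product of invertible factors whose inverse is read
off factor by factor, with `(A ⊗ I)⁻¹ = A⁻¹ ⊗ I`.
-/

open Matrix Kronecker

namespace Matrix

theorem kronecker_mul_mul_kronecker {R l l' m n p q : Type*} [CommSemiring R] [Fintype l]
    [Fintype m] [Fintype n] [Fintype p] [Fintype q] [DecidableEq l] [DecidableEq p] [DecidableEq q]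
    (A : Matrix l l R) (B : Matrix p m R)
    (M : Matrix (l × m) (l × n) R) (A' : Matrix l l' R) (C : Matrix n q R) :
    (A ⊗ₖ B) * M * (A' ⊗ₖ C) =
      (A ⊗ₖ (1 : Matrix p p R)) * (((1 : Matrix l l R) ⊗ₖ B) * M * ((1 : Matrix l l R) ⊗ₖ C)) *
        (A' ⊗ₖ (1 : Matrix q q R)) := by
  have hAB : A ⊗ₖ B = (A ⊗ₖ (1 : Matrix p p R)) * ((1 : Matrix l l R) ⊗ₖ B) := by
    rw [← mul_kronecker_mul, Matrix.mul_one, Matrix.one_mul]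
  have hAC : A' ⊗ₖ C = ((1 : Matrix l l R) ⊗ₖ C) * (A' ⊗ₖ (1 : Matrix q q R)) := by
    rw [← mul_kronecker_mul, Matrix.mul_one, Matrix.one_mul]
  simp only [hAB, hAC, Matrix.mul_assoc]

-- For singular `A` (or `c = 0`) both sides are the junk value `0`.
theorem inv_smul₀ {n K : Type*} [Fintype n] [DecidableEq n] [Field K] (c : K)
    (A : Matrix n n K) : (c • A)⁻¹ = c⁻¹ • A⁻¹ := by
  rcases eq_or_ne c 0 with rfl | hc
  · simp
  by_cases hA : IsUnit A.det
  · exact inv_smul' A (Units.mk0 c hc) hA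
  · have hcA : ¬IsUnit (c • A).det := by
      rwa [det_smul, (isUnit_iff_ne_zero.mpr (pow_ne_zero _ hc)).mul_left_iff]
    rw [nonsing_inv_apply_not_isUnit _ hA, nonsing_inv_apply_not_isUnit _ hcA, smul_zero]

end Matrix

theorem kronecker_schur_inverse_general
    (s nu np : ℕ)
    (A : Matrix (Fin s) (Fin s) ℝ) (hA : IsUnit A.det)
    (B : Matrix (Fin np) (Fin nu) ℝ)
    (Φ : Matrix (Fin s × Fin nu) (Fin s × Fin nu) ℝ)
    (Δt : ℝ) (hΔt : Δt ≠ 0)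
    (Ψ₁ : Matrix (Fin s × Fin nu) (Fin s × Fin np) ℝ)
    (hΨ₁ : Ψ₁ = Δt • (A ⊗ₖ Bᵀ))
    (Ψ₂ : Matrix (Fin s × Fin np) (Fin s × Fin nu) ℝ)
    (hΨ₂ : Ψ₂ = Δt • (A ⊗ₖ B))
    (Sint : Matrix (Fin s × Fin np) (Fin s × Fin np) ℝ)
    (hSint : Sint = ((1 : Matrix (Fin s) (Fin s) ℝ) ⊗ₖ B) * Φ⁻¹ *
        ((1 : Matrix (Fin s) (Fin s) ℝ) ⊗ₖ Bᵀ))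
    (hSintInv : IsUnit Sint.det) :
    IsUnit (Ψ₂ * Φ⁻¹ * Ψ₁).det ∧
      (Ψ₂ * Φ⁻¹ * Ψ₁)⁻¹ =
        (Δt ^ 2)⁻¹ •
          ((A⁻¹ ⊗ₖ (1 : Matrix (Fin np) (Fin np) ℝ)) * Sint⁻¹ *
            (A⁻¹ ⊗ₖ (1 : Matrix (Fin np) (Fin np) ℝ))) := by
  set K := A ⊗ₖ (1 : Matrix (Fin np) (Fin np) ℝ)
  have hK : IsUnit K.det := by
    simpa only [K, det_kronecker, det_one, one_pow, mul_one] using hA.pow _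
  have hM : Ψ₂ * Φ⁻¹ * Ψ₁ = Δt ^ 2 • (K * Sint * K) := by
    rw [hΨ₁, hΨ₂, Matrix.smul_mul, Matrix.mul_smul, Matrix.smul_mul, smul_smul, ← sq,
      kronecker_mul_mul_kronecker A B _ A Bᵀ, ← hSint]
  rw [hM]
  constructor
  · rw [det_smul, det_mul, det_mul]
    exact (isUnit_iff_ne_zero.mpr (pow_ne_zero _ (pow_ne_zero 2 hΔt))).mul
      ((hK.mul hSintInv).mul hK)
  · rw [inv_smul₀, Matrix.mul_inv_rev, Matrix.mul_inv_rev, inv_kronecker, inv_one,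
      Matrix.mul_assoc]

/-- With `A` invertible, `Δt ≠ 0`, `Φ` invertible,
`Ψ₁ = Δt (A ⊗ Bᵀ)`, `Ψ₂ = Δt (A ⊗ B)` and
`S_int = (I ⊗ B) Φ⁻¹ (I ⊗ Bᵀ)` invertible, the matrix `Ψ₂ Φ⁻¹ Ψ₁` is
invertible and `(Ψ₂ Φ⁻¹ Ψ₁)⁻¹ = Δt⁻² (A⁻¹ ⊗ I) S_int⁻¹ (A⁻¹ ⊗ I)`. -/
theorem kronecker_schur_inverse
    (s nu np : ℕ) (hs : 0 < s) (hnu : 0 < nu) (hnp : 0 < np)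
    (A : Matrix (Fin s) (Fin s) ℝ) (hA : IsUnit A.det)
    (B : Matrix (Fin np) (Fin nu) ℝ)
    (Φ : Matrix (Fin s × Fin nu) (Fin s × Fin nu) ℝ) (hΦ : IsUnit Φ.det)
    (Δt : ℝ) (hΔt : Δt ≠ 0)
    (Ψ₁ : Matrix (Fin s × Fin nu) (Fin s × Fin np) ℝ)
    (hΨ₁ : Ψ₁ = Δt • (A ⊗ₖ Bᵀ))
    (Ψ₂ : Matrix (Fin s × Fin np) (Fin s × Fin nu) ℝ)
    (hΨ₂ : Ψ₂ = Δt • (A ⊗ₖ B))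
    (Sint : Matrix (Fin s × Fin np) (Fin s × Fin np) ℝ)
    (hSint : Sint = ((1 : Matrix (Fin s) (Fin s) ℝ) ⊗ₖ B) * Φ⁻¹ *
        ((1 : Matrix (Fin s) (Fin s) ℝ) ⊗ₖ Bᵀ))
    (hSintInv : IsUnit Sint.det) :
    IsUnit (Ψ₂ * Φ⁻¹ * Ψ₁).det ∧
      (Ψ₂ * Φ⁻¹ * Ψ₁)⁻¹ =
        (Δt ^ 2)⁻¹ •
          ((A⁻¹ ⊗ₖ (1 : Matrix (Fin np) (Fin np) ℝ)) * Sint⁻¹ *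
            (A⁻¹ ⊗ₖ (1 : Matrix (Fin np) (Fin np) ℝ))) :=
  kronecker_schur_inverse_general s nu np A hA B Φ Δt hΔt Ψ₁ hΨ₁ Ψ₂ hΨ₂ Sint hSint hSintInv
end

section
/- Let A_RK ∈ ℝ^{s×s} be invertible with last row equal to the weight vector b ∈ ℝ^s (i.e., a_{s,j} = b_j for all j). Then the stability function R(z) = 1 + z · bᵀ (I - z A_RK)⁻¹ 𝟙 tends to 0 as z → +∞. -/
/-!
Stiff accuracy turns the last component of the resolvent equation `(1 - z A) v = 𝟙` into
`1 = v_s - z bᵀ v`, so `R(z) = v_s(z)` whenever `1 - z A` is invertible. As `A` is invertible,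
`(1 - z A)⁻¹ = z⁻¹ (z⁻¹ - A)⁻¹` behaves like `z⁻¹ (-A)⁻¹` and tends to `0` as `z → ∞`, hence so does `R`.
-/

open Matrix Filter Topology

namespace Matrix

theorem one_sub_smul_eq_smul_inv_smul_one_sub {n K : Type*} [DecidableEq n] [Field K]
    (A : Matrix n n K) {z : K} (hz : z ≠ 0) : 1 - z • A = z • (z⁻¹ • 1 - A) := by
  rw [smul_sub, smul_smul, mul_inv_cancel₀ hz, one_smul]

variable {n : Type*} [Fintype n] [DecidableEq n]

theorem one_sub_smul_mulVec_apply {R : Type*} [CommRing R] (A : Matrix n n R) (z : R)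
    (v : n → R) (i : n) : ((1 - z • A) *ᵥ v) i = v i - z * (A i ⬝ᵥ v) := by
  rw [sub_mulVec, one_mulVec, smul_mulVec, Pi.sub_apply, Pi.smul_apply, smul_eq_mul]
  rfl

theorem one_add_smul_dotProduct_eq_apply_of_row_eq {R : Type*} [CommRing R] {A : Matrix n n R}
    {b : n → R} {i : n} (hi : A i = b) {z : R} {v : n → R} (hv : (1 - z • A) *ᵥ v = 1) :
    1 + z * (b ⬝ᵥ v) = v i := by
  have hrow := congrFun hv i
  rw [one_sub_smul_mulVec_apply, hi, Pi.one_apply] at hrow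
  linear_combination -hrow

section Real

variable {A : Matrix n n ℝ}

theorem eventually_isUnit_det_inv_smul_one_sub (hA : IsUnit A.det) :
    ∀ᶠ z : ℝ in atTop, IsUnit (z⁻¹ • 1 - A).det := by
  have hcont : Continuous fun t : ℝ => (t • (1 : Matrix n n ℝ) - A).det := by fun_prop
  have hlim := (hcont.tendsto 0).comp tendsto_inv_atTop_zero
  simp only [zero_smul, zero_sub, det_neg] at hlim
  exact (hlim.eventually_ne (mul_ne_zero (by simp) hA.ne_zero)).mono fun _ => Ne.isUnit

theorem eventually_isUnit_det_one_sub_smul (hA : IsUnit A.det) :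
    ∀ᶠ z : ℝ in atTop, IsUnit (1 - z • A).det := by
  filter_upwards [eventually_isUnit_det_inv_smul_one_sub hA, eventually_ne_atTop 0] with z h hz
  rw [one_sub_smul_eq_smul_inv_smul_one_sub A hz, det_smul]
  exact (Ne.isUnit (pow_ne_zero _ hz)).mul h

theorem tendsto_inv_one_sub_smul_atTop (hA : IsUnit A.det) :
    Tendsto (fun z : ℝ => (1 - z • A)⁻¹) atTop (𝓝 0) := by
  have hdet : (-A).det ≠ 0 := by simpa [det_neg] using hA.ne_zero
  have hinv : ContinuousAt Inv.inv (-A) :=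
    continuousAt_matrix_inv _ (by simpa [Ring.inverse_eq_inv'] using continuousAt_inv₀ hdet)
  have hshift : Tendsto (fun z : ℝ => z⁻¹ • (1 : Matrix n n ℝ) - A) atTop (𝓝 (-A)) := by
    have hcont : Continuous fun t : ℝ => t • (1 : Matrix n n ℝ) - A := by fun_prop
    simpa [Function.comp_def] using (hcont.tendsto 0).comp tendsto_inv_atTop_zero
  have hlim := tendsto_inv_atTop_zero.smul (hinv.tendsto.comp hshift)
  rw [zero_smul] at hlim
  refine hlim.congr' ?_
  filter_upwards [eventually_isUnit_det_inv_smul_one_sub hA, eventually_ne_atTop 0] with z h hz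
  rw [one_sub_smul_eq_smul_inv_smul_one_sub A hz]
  exact (inv_smul' _ (Units.mk0 z hz) h).symm

end Real

end Matrix

/-- For an invertible Butcher matrix `A_RK` whose last row
equals the weight vector `b` (stiff accuracy), the stability function
`R(z) = 1 + z bᵀ (I - z A_RK)⁻¹ 𝟙` tends to `0` as `z → +∞`. -/
theorem stiffly_accurate_L_stable_limit
    (s : ℕ) (hs : 0 < s)
    (A : Matrix (Fin s) (Fin s) ℝ) (hA : IsUnit A.det)
    (b : Fin s → ℝ)
    (hlast : ∀ j, A ⟨s - 1, by omega⟩ j = b j) :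
    Tendsto
        (fun z : ℝ =>
          1 + z * dotProduct b
            (((1 : Matrix (Fin s) (Fin s) ℝ) - z • A)⁻¹ *ᵥ fun _ => (1 : ℝ)))
        atTop (nhds 0) := by
  have hv : Tendsto (fun z : ℝ => ((1 - z • A)⁻¹ *ᵥ 1) ⟨s - 1, by omega⟩) atTop (𝓝 0) := by
    have hcont : Continuous fun M : Matrix (Fin s) (Fin s) ℝ => M *ᵥ 1 :=
      continuous_id.matrix_mulVec continuous_const
    simpa [Function.comp_def] using ((continuous_apply _).tendsto _).comp
      ((hcont.tendsto 0).comp (tendsto_inv_one_sub_smul_atTop hA))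
  refine hv.congr' ?_
  filter_upwards [eventually_isUnit_det_one_sub_smul hA] with z hz
  refine (one_add_smul_dotProduct_eq_apply_of_row_eq (funext hlast) ?_).symm
  rw [mulVec_mulVec, mul_nonsing_inv _ hz, one_mulVec]
end
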